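/- If f(x) = ∑_{n∈ℤ} f̂(n) e^{inx} with |f̂(n)| ≤ c·q^{n^k} for some c > 0, 0 < q < 1 and integer k ≥ 1, then for every m ≥ 0, sup_x |f^{(m)}(x)| ≤ C·B^m·m^{m/k} for some constants C, B > 0 depending only on c, q, k. -/

import Mathlib

open Complex

/-! Termwise, the `m`-th derivative is bounded by `|n|^m ‖f̂(n)‖ ≤ c |n|^m q^{|n|^k}`. Half of the
decay, `√q^{|n|^k} ≤ √q^{|n|}`, makes the series converge geometrically; the other half absorbs
the polynomial factor: with `x = |n|^k` and `j = ⌊m/k⌋ + 1` one has `|n|^m ≤ x^j`, the exponential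
series gives `x^j e^{-αx} ≤ j!/α^j` for `α = -log √q`, and `j! ≤ 2^m m^{m/k}`. -/

open Nat in
lemma Real.pow_mul_exp_neg_mul_le {x α : ℝ} (hx : 0 ≤ x) (hα : 0 < α) (j : ℕ) :
    x ^ j * Real.exp (-(α * x)) ≤ j ! / α ^ j := by
  have h := Real.pow_div_factorial_le_exp (α * x) (by positivity) j
  rw [div_le_iff₀ (by positivity), mul_pow] at h
  rw [Real.exp_neg, ← div_eq_mul_inv, div_le_div_iff₀ (Real.exp_pos _) (by positivity)]
  linarith

lemma Nat.pow_le_pow_pow_div_add_one {p k : ℕ} (hp : 0 < p) (hk : 0 < k) (m : ℕ) :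
    p ^ m ≤ (p ^ k) ^ (m / k + 1) := by
  rw [← pow_mul]
  exact Nat.pow_le_pow_right hp (Nat.lt_mul_div_succ m hk).le

open Nat in
lemma Nat.cast_factorial_div_add_one_le (m k : ℕ) :
    ((m / k + 1)! : ℝ) ≤ 2 ^ m * (m : ℝ) ^ ((m : ℝ) / k) := by
  have hdiv : m / k ≤ m := Nat.div_le_self m k
  have hnat : (m / k + 1)! ≤ 2 ^ m * m ^ (m / k) :=
    calc (m / k + 1)! = (m / k + 1) * (m / k)! := Nat.factorial_succ _
      _ ≤ (m + 1) * (m / k) ^ (m / k) := Nat.mul_le_mul (by omega) (Nat.factorial_le_pow _)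
      _ ≤ 2 ^ m * m ^ (m / k) := Nat.mul_le_mul Nat.lt_two_pow_self (Nat.pow_le_pow_left hdiv _)
  have hrpow : (m : ℝ) ^ (m / k) ≤ (m : ℝ) ^ ((m : ℝ) / k) := by
    rcases m.eq_zero_or_pos with rfl | hm
    · simp
    rw [← Real.rpow_natCast]
    exact Real.rpow_le_rpow_of_exponent_le (by exact_mod_cast hm) Nat.cast_div_le
  calc ((m / k + 1)! : ℝ) ≤ 2 ^ m * (m : ℝ) ^ (m / k) := by exact_mod_cast hnat
    _ ≤ 2 ^ m * (m : ℝ) ^ ((m : ℝ) / k) := by gcongr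

open Nat in
lemma pow_mul_pow_pow_le_factorial_mul {r : ℝ} (hr0 : 0 < r) (hr1 : r < 1) {k : ℕ} (hk : 0 < k)
    (m p : ℕ) :
    (p : ℝ) ^ m * r ^ (p ^ k) ≤ (m / k + 1)! * (max 1 (-Real.log r)⁻¹) ^ (m / k + 1) := by
  set j := m / k + 1
  set α := -Real.log r
  have hα : 0 < α := neg_pos.2 (Real.log_neg hr0 hr1)
  rcases p.eq_zero_or_pos with rfl | hp
  · calc ((0 : ℕ) : ℝ) ^ m * r ^ (0 ^ k) ≤ 1 := by
          rw [zero_pow hk.ne', pow_zero, mul_one, Nat.cast_zero]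
          exact pow_le_one₀ le_rfl zero_le_one
      _ ≤ _ := one_le_mul_of_one_le_of_one_le (Nat.one_le_cast.2 (Nat.factorial_pos _))
          (one_le_pow₀ (le_max_left _ _))
  have hr : r ^ (p ^ k) = Real.exp (-(α * (p ^ k : ℕ))) := by
    rw [← Real.rpow_natCast, Real.rpow_def_of_pos hr0, neg_mul, neg_neg, mul_comm]
  calc (p : ℝ) ^ m * r ^ (p ^ k) ≤ ((p ^ k : ℕ) : ℝ) ^ j * Real.exp (-(α * (p ^ k : ℕ))) := by
        rw [hr]
        gcongr
        exact_mod_cast Nat.pow_le_pow_pow_div_add_one hp hk m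
    _ ≤ j ! / α ^ j := Real.pow_mul_exp_neg_mul_le (Nat.cast_nonneg _) hα j
    _ = j ! * α⁻¹ ^ j := by rw [inv_pow, div_eq_mul_inv]
    _ ≤ j ! * (max 1 α⁻¹) ^ j := by gcongr; exact le_max_right _ _

open Nat in
lemma exists_pow_mul_pow_pow_le {r : ℝ} (hr0 : 0 < r) (hr1 : r < 1) {k : ℕ} (hk : 0 < k) :
    ∃ A > 0, ∀ m p : ℕ, (p : ℝ) ^ m * r ^ (p ^ k) ≤ A * (2 * A) ^ m * (m : ℝ) ^ ((m : ℝ) / k) := by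
  set A := max 1 (-Real.log r)⁻¹
  have hA : 1 ≤ A := le_max_left _ _
  refine ⟨A, by positivity, fun m p => ?_⟩
  calc (p : ℝ) ^ m * r ^ (p ^ k) ≤ (m / k + 1)! * A ^ (m / k + 1) :=
        pow_mul_pow_pow_le_factorial_mul hr0 hr1 hk m p
    _ ≤ (2 ^ m * (m : ℝ) ^ ((m : ℝ) / k)) * A ^ (m + 1) := by
        gcongr
        · exact Nat.cast_factorial_div_add_one_le m k
        · exact Nat.div_le_self m k
    _ = A * (2 * A) ^ m * (m : ℝ) ^ ((m : ℝ) / k) := by ring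

lemma hasSum_pow_natAbs {r : ℝ} (hr0 : 0 ≤ r) (hr1 : r < 1) :
    HasSum (fun n : ℤ => r ^ n.natAbs) ((1 + r) / (1 - r)) := by
  have h := hasSum_geometric_of_lt_one hr0 hr1
  have hZ := HasSum.of_nat_of_neg (f := fun n : ℤ => r ^ n.natAbs) (by simpa using h)
    (by simpa using h)
  have hr : 1 - r ≠ 0 := by linarith
  rwa [Int.natAbs_zero, pow_zero, ← two_mul, ← div_eq_mul_inv, div_sub_one hr,
    show 2 - (1 - r) = 1 + r by ring] at hZ

lemma norm_intCast_mul_I_pow_mul_mul_exp (n : ℤ) (m : ℕ) (z : ℂ) (x : ℝ) :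
    ‖((n : ℂ) * I) ^ m * z * exp (n * x * I)‖ = (n.natAbs : ℝ) ^ m * ‖z‖ := by
  have hexp : ‖exp (n * x * I)‖ = 1 := by exact_mod_cast norm_exp_ofReal_mul_I (n * x)
  rw [norm_mul, norm_mul, norm_pow, norm_mul, norm_I, mul_one, norm_intCast, hexp, mul_one,
    Nat.cast_natAbs, Int.cast_abs]

/-- If `|f̂(n)| ≤ c q^{|n|^k}` with `0 < q < 1`, `k ≥ 1`, then the termwise `m`-th derivative
`f^{(m)}(x) = ∑ (in)^m f̂(n) e^{inx}` satisfies `sup_x |f^{(m)}(x)| ≤ C B^m m^{m/k}` for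
constants `C, B > 0` depending only on `c, q, k`. -/
theorem quasi_analytic_derivative_bound (c q : ℝ) (k : ℕ) (hc : 0 < c)
    (hq0 : 0 < q) (hq1 : q < 1) (hk : 1 ≤ k) (a : ℤ → ℂ)
    (ha : ∀ n : ℤ, ‖a n‖ ≤ c * q ^ (n.natAbs ^ k)) :
    ∃ C B : ℝ, 0 < C ∧ 0 < B ∧ ∀ (m : ℕ) (x : ℝ),
      ‖∑' n : ℤ, ((n : ℂ) * Complex.I) ^ m * a n * Complex.exp ((n : ℂ) * x * Complex.I)‖ ≤
        C * B ^ m * (m : ℝ) ^ ((m : ℝ) / k) := by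
  set r := Real.sqrt q
  have hr0 : 0 < r := Real.sqrt_pos.2 hq0
  have hr1 : r < 1 := (Real.sqrt_lt_sqrt hq0.le hq1).trans_eq Real.sqrt_one
  have hq : q = r ^ 2 := (Real.sq_sqrt hq0.le).symm
  obtain ⟨A, hA, hpow⟩ := exists_pow_mul_pow_pow_le hr0 hr1 hk
  have hS : 0 < (1 + r) / (1 - r) := div_pos (by linarith) (by linarith)
  refine ⟨c * A * ((1 + r) / (1 - r)), 2 * A, by positivity, by positivity, fun m x => ?_⟩
  set D := A * (2 * A) ^ m * (m : ℝ) ^ ((m : ℝ) / k)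
  refine (tsum_of_norm_bounded ((hasSum_pow_natAbs hr0.le hr1).mul_left (c * D))
    fun n => ?_).trans_eq (by ring)
  set p := n.natAbs
  rw [norm_intCast_mul_I_pow_mul_mul_exp]
  calc (p : ℝ) ^ m * ‖a n‖ ≤ (p : ℝ) ^ m * (c * q ^ (p ^ k)) := by gcongr; exact ha n
    _ = c * ((p : ℝ) ^ m * r ^ (p ^ k)) * r ^ (p ^ k) := by rw [hq, ← pow_mul]; ring
    _ ≤ c * D * r ^ p := by
        gcongr c * ?_ * ?_
        · exact hpow m p
        · exact pow_le_pow_of_le_one hr0.le hr1.le (Nat.le_self_pow (by omega) p)
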